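/- Let N be a positive integer. For every y > 0, the function F_y is differentiable at y and F_y'(y) = (N·y + 1)/(y²(1+y)^N) − N/(y(1+y)) + Σ_{m=1}^{N−1} N/(1+y)^{N−m+1}. -/

import Mathlib

open MeasureTheory Real Finset

/-- The auxiliary function `F_y` of Lemma 1 (case α = 2) of the paper:
`F_y(y) = N·ln(1 + 1/y) − 1/(y(1+y)^{N−1}) − Σ_{m=1}^{N−1} N/((1+y)^{N−m}(N−m))`. -/
noncomputable def Fy (N : ℕ) (y : ℝ) : ℝ :=
  (N : ℝ) * Real.log (1 + 1 / y) - 1 / (y * (1 + y) ^ (N - 1)) -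
    ∑ m ∈ Finset.Icc 1 (N - 1), (N : ℝ) / ((1 + y) ^ (N - m) * ((N - m : ℕ) : ℝ))

/-- For a positive integer `N` and `y > 0`, the function `F_y` is
differentiable at `y` with
`F_y'(y) = (N·y + 1)/(y²(1+y)^N) − N/(y(1+y)) + Σ_{m=1}^{N−1} N/(1+y)^{N−m+1}`. -/
theorem Fy_hasDerivAt (N : ℕ) (hN : 0 < N) (y : ℝ) (hy : 0 < y) :
    HasDerivAt (Fy N)
      (((N : ℝ) * y + 1) / (y ^ 2 * (1 + y) ^ N) - (N : ℝ) / (y * (1 + y)) +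
        ∑ m ∈ Finset.Icc 1 (N - 1), (N : ℝ) / (1 + y) ^ (N - m + 1)) y := by
  have hy1 : (0:ℝ) < 1 + y := by linarith
  have h1 : HasDerivAt (fun y : ℝ => 1 + y) 1 y := by
    simpa using (hasDerivAt_id y).const_add 1
  -- Piece A
  have A : HasDerivAt (fun y : ℝ => (N:ℝ) * Real.log (1 + 1 / y))
      (-(N:ℝ) / (y * (1 + y))) y := by
    have hu : HasDerivAt (fun y : ℝ => 1 + 1 / y) (-(y^2)⁻¹) y := by
      simpa [one_div] using (hasDerivAt_inv hy.ne').const_add 1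
    have hne : 1 + 1 / y ≠ 0 := by positivity
    have := (hu.log hne).const_mul (N:ℝ)
    convert! this using 1
    field_simp
    ring
  -- Piece B
  have B : HasDerivAt (fun y : ℝ => 1 / (y * (1 + y) ^ (N - 1)))
      (-(((N:ℝ) * y + 1) / (y ^ 2 * (1 + y) ^ N))) y := by
    have hpow := h1.fun_pow (N - 1)
    have hg := (hasDerivAt_id y).fun_mul hpow
    have hgne : y * (1 + y) ^ (N - 1) ≠ 0 := by positivity
    have := hg.fun_inv hgne
    have heq : (fun y : ℝ => 1 / (y * (1 + y) ^ (N - 1)))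
        = fun y : ℝ => (y * (1 + y) ^ (N - 1))⁻¹ := by
      funext z; rw [one_div]
    rw [heq]
    convert! this using 1
    match N, hN with
    | 1, _ => simp; field_simp; ring
    | (n+2), _ =>
      simp only [Nat.add_sub_cancel, Nat.succ_sub_one, id]
      push_cast
      field_simp
      ring
  -- Piece C
  have C : HasDerivAt
      (fun y : ℝ => ∑ m ∈ Finset.Icc 1 (N - 1), (N:ℝ) / ((1 + y) ^ (N - m) * ((N - m : ℕ) : ℝ)))
      (∑ m ∈ Finset.Icc 1 (N - 1), -((N:ℝ) / (1 + y) ^ (N - m + 1))) y := by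
    apply HasDerivAt.fun_sum
    intro m hm
    rw [Finset.mem_Icc] at hm
    obtain ⟨i, hi⟩ : ∃ i, N - m = i + 1 := by
      have : 1 ≤ N - m := by omega
      exact ⟨N - m - 1, by omega⟩
    have base : HasDerivAt (fun y : ℝ => (1 + y) ^ (N - m) * ((N - m : ℕ) : ℝ))
        ((↑(N - m) * (1 + y) ^ (N - m - 1) * 1) * ((N - m : ℕ) : ℝ)) y :=
      (h1.fun_pow (N - m)).mul_const _
    have hne : (1 + y) ^ (N - m) * ((N - m : ℕ) : ℝ) ≠ 0 := by
      rw [hi]; push_cast; positivity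
    have hfin := (base.fun_inv hne).const_mul (N:ℝ)
    have heq : (fun y : ℝ => (N:ℝ) / ((1 + y) ^ (N - m) * ((N - m : ℕ) : ℝ)))
        = fun y : ℝ => (N:ℝ) * ((1 + y) ^ (N - m) * ((N - m : ℕ) : ℝ))⁻¹ := by
      funext z; rw [div_eq_mul_inv]
    rw [heq]
    convert! hfin using 1
    rw [hi]
    simp only [Nat.add_sub_cancel]
    push_cast
    field_simp
    ring
  have total := (A.fun_sub B).fun_sub C
  have : Fy N = fun y : ℝ =>
      (N:ℝ) * Real.log (1 + 1 / y) - 1 / (y * (1 + y) ^ (N - 1)) -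
        ∑ m ∈ Finset.Icc 1 (N - 1), (N:ℝ) / ((1 + y) ^ (N - m) * ((N - m : ℕ) : ℝ)) := rfl
  rw [this]
  convert! total using 1
  rw [Finset.sum_neg_distrib]
  ring
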